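/- arXiv:2212.09236 — 5 statements merged into one kernel-verified Lean document; each statement's English description precedes it below -/
import Mathlib

section
/- Let L be a GO-space. Then the operation of function composition, as a map from M_p(L) × M_p(L) to M_p(L) sending (f, g) to f ∘ g, is continuous; in other words, M_p(L) is a paratopological group. -/
open Set Topology TopologicalSpace Filter

variable (L : Type*) [LinearOrder L] [TopologicalSpace L]

/-- The set `M(L)` of monotonic autohomeomorphisms of `L`: homeomorphisms `L → L` that are
either strictly increasing or strictly decreasing. -/
abbrev MonoHomeo := {f : L ≃ₜ L // StrictMono f ∨ StrictAnti f}

namespace MonoHomeo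

variable {L}

/-- The topology of pointwise convergence on `M(L)`, giving `M_p(L)`: the topology induced
from the product topology on `L → L` via the underlying-function map. -/
instance : TopologicalSpace (MonoHomeo L) :=
  TopologicalSpace.induced (fun f => ((f.1 : L ≃ₜ L) : L → L)) Pi.topologicalSpace

theorem symm_strictMono {e : L ≃ₜ L} (h : StrictMono e) : StrictMono (e.symm : L → L) := by
  intro a b hab
  rw [← e.apply_symm_apply a, ← e.apply_symm_apply b] at hab
  exact h.lt_iff_lt.mp hab

theorem symm_strictAnti {e : L ≃ₜ L} (h : StrictAnti e) : StrictAnti (e.symm : L → L) := by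
  intro a b hab
  rw [← e.apply_symm_apply a, ← e.apply_symm_apply b] at hab
  exact h.lt_iff_gt.mp hab

/-- Composition in `M(L)`: `f * g = f ∘ g`. -/
instance : Mul (MonoHomeo L) :=
  ⟨fun f g => ⟨g.1.trans f.1, by
    rcases f.2 with hf | hf <;> rcases g.2 with hg | hg
    · exact Or.inl (hf.comp hg)
    · exact Or.inr (hf.comp_strictAnti hg)
    · exact Or.inr (hf.comp_strictMono hg)
    · exact Or.inl (hf.comp hg)⟩⟩

instance : One (MonoHomeo L) := ⟨⟨Homeomorph.refl L, Or.inl strictMono_id⟩⟩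

/-- Inversion in `M(L)`. -/
instance : Inv (MonoHomeo L) :=
  ⟨fun f => ⟨f.1.symm, by
    rcases f.2 with hf | hf
    · exact Or.inl (symm_strictMono hf)
    · exact Or.inr (symm_strictAnti hf)⟩⟩

@[simp] theorem mul_apply (f g : MonoHomeo L) (x : L) : (f * g).1 x = f.1 (g.1 x) := rfl

@[simp] theorem inv_apply (f : MonoHomeo L) (x : L) : (f⁻¹).1 x = f.1.symm x := rfl

@[simp] theorem one_apply (x : L) : (1 : MonoHomeo L).1 x = x := rfl

/-- `M(L)` is a group under composition. -/
instance : Group (MonoHomeo L) where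
  mul_assoc f g h := Subtype.ext (by ext x; rfl)
  one_mul f := Subtype.ext (by ext x; rfl)
  mul_one f := Subtype.ext (by ext x; rfl)
  inv_mul_cancel f := Subtype.ext (by ext x; exact f.1.symm_apply_apply x)

end MonoHomeo

private lemma continuous_eval {L : Type*} [LinearOrder L] [TopologicalSpace L] (y : L) :
    Continuous fun f : MonoHomeo L => (f.1 : L → L) y :=
  (continuous_apply y).comp continuous_induced_dom

/-- For a GO-space `L`, composition `(f, g) ↦ f ∘ g = f * g` is continuous
as a map `M_p(L) × M_p(L) → M_p(L)`; i.e., `M_p(L)` is a paratopological group. -/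
theorem continuous_comp
    {L : Type*} [LinearOrder L] [TopologicalSpace L]
    (GO_fine : ∀ s : Set L, IsOpen[Preorder.topology L] s → IsOpen s)
    (GO_basis : ∃ B : Set (Set L), (∀ s ∈ B, s.OrdConnected) ∧
      TopologicalSpace.IsTopologicalBasis B) :
    Continuous fun p : MonoHomeo L × MonoHomeo L => p.1 * p.2 := by
  obtain ⟨B, hBconv, hB⟩ := GO_basis
  have hIoi : ∀ a : L, IsOpen (Ioi a) := fun a => GO_fine _ (by
    letI := Preorder.topology L
    haveI : OrderTopology L := ⟨rfl⟩
    exact isOpen_Ioi)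
  have hIio : ∀ a : L, IsOpen (Iio a) := fun a => GO_fine _ (by
    letI := Preorder.topology L
    haveI : OrderTopology L := ⟨rfl⟩
    exact isOpen_Iio)
  apply continuous_induced_rng.2
  apply continuous_pi
  intro x
  rw [continuous_iff_continuousAt]
  rintro ⟨f₀, g₀⟩
  rw [ContinuousAt, hB.nhds_hasBasis.tendsto_right_iff]
  rintro U ⟨hUB, hU⟩
  set y₀ := (g₀.1 : L → L) x with hy₀
  have hUopen : IsOpen U := hB.isOpen hUB
  have hpre : IsOpen ((f₀.1 : L → L) ⁻¹' U) := hUopen.preimage f₀.1.continuous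
  obtain ⟨V, hVB, hyV, hVsub⟩ := hB.exists_subset_of_mem_open (show y₀ ∈ (f₀.1 : L → L) ⁻¹' U from hU) hpre
  have hVopen : IsOpen V := hB.isOpen hVB
  -- choose a lower control point
  obtain ⟨a, haV, -, S₁, hS₁o, hyS₁, haS⟩ :
      ∃ a ∈ V, a ≤ y₀ ∧ ∃ S, IsOpen S ∧ y₀ ∈ S ∧ ∀ v ∈ V ∩ S, a ≤ v := by
    by_cases h : ∃ a ∈ V, a < y₀
    · obtain ⟨a, haV, hlt⟩ := h
      exact ⟨a, haV, hlt.le, Ioi a, hIoi a, hlt, fun v hv => le_of_lt hv.2⟩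
    · exact ⟨y₀, hyV, le_rfl, univ, isOpen_univ, mem_univ _,
        fun v hv => not_lt.1 fun hc => h ⟨v, hv.1, hc⟩⟩
  -- choose an upper control point
  obtain ⟨b, hbV, -, S₂, hS₂o, hyS₂, hbS⟩ :
      ∃ b ∈ V, y₀ ≤ b ∧ ∃ S, IsOpen S ∧ y₀ ∈ S ∧ ∀ v ∈ V ∩ S, v ≤ b := by
    by_cases h : ∃ b ∈ V, y₀ < b
    · obtain ⟨b, hbV, hlt⟩ := h
      exact ⟨b, hbV, hlt.le, Iio b, hIio b, hlt, fun v hv => le_of_lt hv.2⟩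
    · exact ⟨y₀, hyV, le_rfl, univ, isOpen_univ, mem_univ _,
        fun v hv => not_lt.1 fun hc => h ⟨v, hv.1, hc⟩⟩
  have hEv : ∀ c ∈ V, ∀ᶠ p : MonoHomeo L × MonoHomeo L in 𝓝 (f₀, g₀),
      (p.1.1 : L → L) c ∈ U := by
    intro c hc
    have hct : ContinuousAt (fun p : MonoHomeo L × MonoHomeo L => (p.1.1 : L → L) c) (f₀, g₀) :=
      ((continuous_eval c).comp continuous_fst).continuousAt
    exact hct (hUopen.mem_nhds (show (f₀.1 : L → L) c ∈ U from hVsub hc))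
  have hgEv : ∀ᶠ p : MonoHomeo L × MonoHomeo L in 𝓝 (f₀, g₀),
      (p.2.1 : L → L) x ∈ V ∩ (S₁ ∩ S₂) := by
    have hct : ContinuousAt (fun p : MonoHomeo L × MonoHomeo L => (p.2.1 : L → L) x) (f₀, g₀) :=
      ((continuous_eval x).comp continuous_snd).continuousAt
    exact hct ((hVopen.inter (hS₁o.inter hS₂o)).mem_nhds ⟨hyV, hyS₁, hyS₂⟩)
  filter_upwards [hEv a haV, hEv b hbV, hgEv] with p hfa hfb hg
  obtain ⟨hgV, hgS₁, hgS₂⟩ := hg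
  have h1 : a ≤ (p.2.1 : L → L) x := haS _ ⟨hgV, hgS₁⟩
  have h2 : (p.2.1 : L → L) x ≤ b := hbS _ ⟨hgV, hgS₂⟩
  show (p.1.1 : L → L) ((p.2.1 : L → L) x) ∈ U
  rcases p.1.2 with hm | hm
  · exact (hBconv U hUB).out hfa hfb ⟨hm.monotone h1, hm.monotone h2⟩
  · exact (hBconv U hUB).out hfb hfa ⟨hm.antitone h2, hm.antitone h1⟩
end

section
/- Let A be the Alexandroff Arrow space, i.e., the set (0,1] ⊆ ℝ with its usual linear order, equipped with the topology generated by all sets of the form (a,b] ∩ (0,1]. Then the operation of inversion, as a map from M_p(A) to M_p(A) sending f to f⁻¹, is not continuous. -/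
open Set Topology TopologicalSpace Filter

variable (L : Type*) [LinearOrder L] [TopologicalSpace L]

/-- The Alexandroff Arrow: the set `(0, 1] ⊆ ℝ`. -/
structure Arrow : Type where
  val : ℝ
  pos : 0 < val
  le_one : val ≤ 1

/-- The linear order on the Arrow is inherited from `ℝ`. -/
noncomputable instance : LinearOrder Arrow :=
  LinearOrder.lift' Arrow.val fun a b h => by cases a; cases b; cases h; rfl

/-- The topology on the Arrow is generated by the traces of the intervals `(a, b]`. -/
instance : TopologicalSpace Arrow :=
  TopologicalSpace.generateFrom
    {s : Set Arrow | ∃ a b : ℝ, a < b ∧ s = {x : Arrow | a < x.val ∧ x.val ≤ b}}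



noncomputable def Fpq (p q x : ℝ) : ℝ :=
  if x ≤ p ∨ q < x then x
  else if x ≤ 1/2 then p + (x - p)/2
  else q + (x - q) * ((q - (p + 1/2)/2) / (q - 1/2))

noncomputable def Gpq (p q y : ℝ) : ℝ :=
  if y ≤ p ∨ q < y then y
  else if y ≤ (p + 1/2)/2 then p + 2*(y - p)
  else q + (y - q) * ((q - 1/2) / (q - (p + 1/2)/2))

theorem Fpq_id_low {p q x : ℝ} (h : x ≤ p) : Fpq p q x = x := by
  unfold Fpq; rw [if_pos (Or.inl h)]

theorem Fpq_id_high {p q x : ℝ} (h : q < x) : Fpq p q x = x := by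
  unfold Fpq; rw [if_pos (Or.inr h)]

theorem Gpq_id_low {p q y : ℝ} (h : y ≤ p) : Gpq p q y = y := by
  unfold Gpq; rw [if_pos (Or.inl h)]

theorem Gpq_id_high {p q y : ℝ} (h : q < y) : Gpq p q y = y := by
  unfold Gpq; rw [if_pos (Or.inr h)]

section
variable {p q : ℝ} (hp : 1/4 ≤ p) (hp2 : p < 1/2) (hq : 1/2 < q) (hq2 : q ≤ 1)
include hp hp2 hq hq2

set_option linter.unusedSectionVars false

theorem Fpq_strictMono : StrictMono (Fpq p q) := by
  have hd1 : q - 1/2 ≠ 0 := sub_ne_zero.mpr hq.ne'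
  have hk : 0 < (q - (p + 1/2)/2) / (q - 1/2) := by
    apply div_pos <;> linarith
  have hkey : (q - 1/2) * ((q - (p + 1/2)/2) / (q - 1/2)) = q - (p + 1/2)/2 := by
    rw [mul_comm]; exact div_mul_cancel₀ _ hd1
  intro x y hxy
  unfold Fpq
  split_ifs <;> (try push_neg at *) <;> casesm* _ ∧ _, _ ∨ _ <;>
    first
      | linarith
      | nlinarith [hkey, hk]

theorem Gpq_Fpq (x : ℝ) : Gpq p q (Fpq p q x) = x := by
  have hd1 : q - 1/2 ≠ 0 := sub_ne_zero.mpr hq.ne'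
  have hd2 : q - (p + 1/2)/2 ≠ 0 := by intro h; nlinarith [h]
  have hk : 0 < (q - (p + 1/2)/2) / (q - 1/2) := by apply div_pos <;> linarith
  have hkey : (q - 1/2) * ((q - (p + 1/2)/2) / (q - 1/2)) = q - (p + 1/2)/2 := by
    rw [mul_comm]; exact div_mul_cancel₀ _ hd1
  rcases le_or_gt x p with h | h
  · rw [Fpq_id_low h, Gpq_id_low h]
  rcases lt_or_ge q x with h3 | h3
  · rw [Fpq_id_high h3, Gpq_id_high h3]
  rcases le_or_gt x (1/2) with h2 | h2
  · have hF : Fpq p q x = p + (x - p)/2 := by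
      unfold Fpq
      rw [if_neg (by push_neg; exact ⟨h, by linarith⟩), if_pos h2]
    rw [hF]
    unfold Gpq
    rw [if_neg (by push_neg; constructor <;> linarith),
        if_pos (by linarith)]
    ring
  · set k := (q - (p + 1/2)/2) / (q - 1/2) with hkdef
    have hF : Fpq p q x = q + (x - q)*k := by
      unfold Fpq
      rw [if_neg (by push_neg; exact ⟨h, h3⟩), if_neg (by linarith)]
    have hv1 : (p + 1/2)/2 < q + (x - q)*k := by
      nlinarith [hkey, mul_pos hk (show (0:ℝ) < x - 1/2 by linarith)]
    have hv2 : q + (x - q)*k ≤ q := by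
      nlinarith [mul_nonneg hk.le (show (0:ℝ) ≤ q - x by linarith)]
    rw [hF]
    unfold Gpq
    rw [if_neg (by push_neg; constructor <;> linarith), if_neg (by linarith)]
    have hstep : (q + (x - q) * k) - q = (x - q) * k := by ring
    have hcan : k * ((q - 1/2) / (q - (p + 1/2)/2)) = 1 := by
      rw [hkdef, div_mul_div_comm, mul_comm (q - (p + 1/2)/2)]
      exact div_self (mul_ne_zero hd1 hd2)
    rw [hstep, mul_assoc, hcan, mul_one]
    ring

theorem Fpq_Gpq (y : ℝ) : Fpq p q (Gpq p q y) = y := by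
  have hd1 : q - 1/2 ≠ 0 := sub_ne_zero.mpr hq.ne'
  have hd2 : q - (p + 1/2)/2 ≠ 0 := by intro h; nlinarith [h]
  have hd2' : 0 < q - (p + 1/2)/2 := by linarith
  have hk' : 0 < (q - 1/2) / (q - (p + 1/2)/2) := by apply div_pos <;> linarith
  have hkey' : (q - (p + 1/2)/2) * ((q - 1/2) / (q - (p + 1/2)/2)) = q - 1/2 := by
    rw [mul_comm]; exact div_mul_cancel₀ _ hd2
  rcases le_or_gt y p with h | h
  · rw [Gpq_id_low h, Fpq_id_low h]
  rcases lt_or_ge q y with h3 | h3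
  · rw [Gpq_id_high h3, Fpq_id_high h3]
  rcases le_or_gt y ((p + 1/2)/2) with h2 | h2
  · have hG : Gpq p q y = p + 2*(y - p) := by
      unfold Gpq
      rw [if_neg (by push_neg; exact ⟨h, by linarith⟩), if_pos h2]
    rw [hG]
    unfold Fpq
    rw [if_neg (by push_neg; constructor <;> linarith), if_pos (by linarith)]
    ring
  · set k' := (q - 1/2) / (q - (p + 1/2)/2) with hkdef
    have hG : Gpq p q y = q + (y - q)*k' := by
      unfold Gpq
      rw [if_neg (by push_neg; exact ⟨h, h3⟩), if_neg (by linarith)]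
    have hv1 : 1/2 < q + (y - q)*k' := by
      nlinarith [hkey', mul_pos hk' (show (0:ℝ) < y - (p + 1/2)/2 by linarith)]
    have hv2 : q + (y - q)*k' ≤ q := by
      nlinarith [mul_nonneg hk'.le (show (0:ℝ) ≤ q - y by linarith)]
    rw [hG]
    unfold Fpq
    rw [if_neg (by push_neg; constructor <;> linarith), if_neg (by linarith)]
    have hstep : (q + (y - q) * k') - q = (y - q) * k' := by ring
    have hcan : k' * ((q - (p + 1/2)/2) / (q - 1/2)) = 1 := by
      rw [hkdef, div_mul_div_comm, mul_comm (q - 1/2)]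
      exact div_self (mul_ne_zero hd2 hd1)
    rw [hstep, mul_assoc, hcan, mul_one]
    ring

theorem Fpq_half : Fpq p q (1/2) = (p + 1/2)/2 := by
  unfold Fpq
  rw [if_neg (by push_neg; constructor <;> linarith), if_pos (le_refl _)]
  ring

theorem Gpq_half_gt : 1/2 < Gpq p q (1/2) := by
  have hd2' : 0 < q - (p + 1/2)/2 := by nlinarith
  have hB : (q - 1/2) / (q - (p + 1/2)/2) < 1 := by
    rw [div_lt_one hd2']; linarith
  have hk' : 0 < (q - 1/2) / (q - (p + 1/2)/2) := by apply div_pos <;> linarith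
  unfold Gpq
  rw [if_neg (by push_neg; constructor <;> linarith), if_neg (by push_neg; linarith)]
  nlinarith [mul_lt_mul_of_pos_left hB (show (0:ℝ) < q - 1/2 by linarith)]

theorem Fpq_q : Fpq p q q = q := by
  unfold Fpq
  rw [if_neg (by push_neg; exact ⟨by linarith, le_refl q⟩), if_neg (by linarith)]
  ring

theorem Gpq_q : Gpq p q q = q := by
  unfold Gpq
  rw [if_neg (by push_neg; exact ⟨by linarith, le_refl q⟩), if_neg (by push_neg; linarith)]
  ring

end

theorem Arrow.ext' {x y : Arrow} (h : x.val = y.val) : x = y := by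
  cases x; cases y; cases h; rfl

theorem arrow_isOpen_of {U : Set Arrow}
    (h : ∀ x ∈ U, ∃ a, a < x.val ∧ ∀ y : Arrow, a < y.val → y.val ≤ x.val → y ∈ U) :
    IsOpen U := by
  choose a ha hsub using h
  have hU : U = ⋃ x : U, {y : Arrow | a x.1 x.2 < y.val ∧ y.val ≤ x.1.val} := by
    ext z
    constructor
    · intro hz
      exact Set.mem_iUnion.mpr ⟨⟨z, hz⟩, ha z hz, le_refl _⟩
    · intro hz
      obtain ⟨x, hx1, hx2⟩ := Set.mem_iUnion.mp hz
      exact hsub x.1 x.2 z hx1 hx2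
  rw [hU]
  exact isOpen_iUnion fun x =>
    TopologicalSpace.GenerateOpen.basic _ ⟨a x.1 x.2, x.1.val, ha x.1 x.2, rfl⟩

theorem arrow_exists_of_isOpen {U : Set Arrow} (hU : IsOpen U) :
    ∀ x ∈ U, ∃ a, a < x.val ∧ ∀ y : Arrow, a < y.val → y.val ≤ x.val → y ∈ U := by
  change TopologicalSpace.GenerateOpen _ U at hU
  induction hU with
  | basic s hs =>
    obtain ⟨a, b, hab, rfl⟩ := hs
    intro x hx
    exact ⟨a, hx.1, fun y hy1 hy2 => ⟨hy1, le_trans hy2 hx.2⟩⟩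
  | univ =>
    intro x _
    exact ⟨x.val - 1, by linarith, fun y _ _ => trivial⟩
  | inter s t _ _ ihs iht =>
    intro x hx
    obtain ⟨a1, h1, hs1⟩ := ihs x hx.1
    obtain ⟨a2, h2, hs2⟩ := iht x hx.2
    exact ⟨max a1 a2, max_lt h1 h2, fun y hy1 hy2 =>
      ⟨hs1 y (lt_of_le_of_lt (le_max_left _ _) hy1) hy2,
       hs2 y (lt_of_le_of_lt (le_max_right _ _) hy1) hy2⟩⟩
  | sUnion S hS ih =>
    intro x hx
    obtain ⟨s, hsS, hxs⟩ := hx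
    obtain ⟨a, h1, h2⟩ := ih s hsS x hxs
    exact ⟨a, h1, fun y hy1 hy2 => ⟨s, hsS, h2 y hy1 hy2⟩⟩

theorem arrow_continuous {e : Arrow ≃ Arrow} (he : StrictMono ⇑e) : Continuous ⇑e := by
  rw [continuous_def]
  intro S hS
  apply arrow_isOpen_of
  intro x hx
  obtain ⟨a, ha, hsub⟩ := arrow_exists_of_isOpen hS (e x) hx
  rcases le_or_gt a 0 with ha0 | ha0
  · refine ⟨x.val - 1, by linarith, fun y _ hy2 => ?_⟩
    refine hsub (e y) (lt_of_le_of_lt ha0 (e y).pos) ?_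
    have : e y ≤ e x := he.le_iff_le.mpr (show y ≤ x from hy2)
    exact this
  · have ha1 : a ≤ 1 := le_trans ha.le (e x).le_one
    set z : Arrow := ⟨a, ha0, ha1⟩ with hz
    set w : Arrow := e.symm z with hw
    have hew : e w = z := e.apply_symm_apply z
    have hwx : w < x := by
      have : e w < e x := by rw [hew]; exact (show z.val < (e x).val from ha)
      exact he.lt_iff_lt.mp this
    refine ⟨w.val, hwx, fun y hy1 hy2 => ?_⟩
    have h1 : e w < e y := he (show w < y from hy1)
    refine hsub (e y) ?_ ?_
    · rw [hew] at h1; exact h1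
    · exact he.le_iff_le.mpr (show y ≤ x from hy2)

theorem equiv_symm_strictMono {e : Arrow ≃ Arrow} (he : StrictMono ⇑e) :
    StrictMono ⇑e.symm := fun a b hab =>
  he.lt_iff_lt.mp (by rwa [e.apply_symm_apply, e.apply_symm_apply])

noncomputable def arrowHomeo (e : Arrow ≃ Arrow) (he : StrictMono ⇑e) : Arrow ≃ₜ Arrow where
  toEquiv := e
  continuous_toFun := arrow_continuous he
  continuous_invFun := arrow_continuous (equiv_symm_strictMono he)

set_option maxHeartbeats 2000000 in
/-- Inversion `f ↦ f⁻¹` is not continuous on `M_p(A)` for the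
Alexandroff Arrow `A`. -/
theorem arrow_inv_not_continuous :
    ¬ Continuous fun f : MonoHomeo Arrow => f⁻¹ := by
  intro hcont
  classical
  set half : Arrow := ⟨1/2, by norm_num, by norm_num⟩ with hhalf
  set S : Set Arrow := {x : Arrow | 1/4 < x.val ∧ x.val ≤ 1/2} with hS
  have hSopen : IsOpen S :=
    TopologicalSpace.GenerateOpen.basic _ ⟨1/4, 1/2, by norm_num, rfl⟩
  have hVopen : IsOpen {f : MonoHomeo Arrow | f.1 half ∈ S} := by
    have h1 : Continuous (fun f : MonoHomeo Arrow => ((f.1 : Arrow ≃ₜ Arrow) : Arrow → Arrow)) :=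
      continuous_induced_dom
    exact hSopen.preimage ((continuous_apply half).comp h1)
  have hW : IsOpen ((fun f : MonoHomeo Arrow => f⁻¹) ⁻¹' {f : MonoHomeo Arrow | f.1 half ∈ S}) :=
    hVopen.preimage hcont
  obtain ⟨T, hT, hTW⟩ := isOpen_induced_iff.mp hW
  have h1W : (1 : MonoHomeo Arrow) ∈
      (fun f : MonoHomeo Arrow => f⁻¹) ⁻¹' {f : MonoHomeo Arrow | f.1 half ∈ S} := by
    show ((1 : MonoHomeo Arrow)⁻¹).1 half ∈ S
    exact ⟨by norm_num [hhalf], by norm_num [hhalf]⟩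
  rw [← hTW] at h1W
  obtain ⟨I, u, hu, hsub⟩ := isOpen_pi_iff.mp hT _ h1W
  have haux : ∀ i : Arrow, ∃ a : ℝ, i ∈ I →
      a < i.val ∧ ∀ y : Arrow, a < y.val → y.val ≤ i.val → y ∈ u i := by
    intro i
    by_cases hi : i ∈ I
    · obtain ⟨a, h1, h2⟩ := arrow_exists_of_isOpen (hu i hi).1 i (hu i hi).2
      exact ⟨a, fun _ => ⟨h1, h2⟩⟩
    · exact ⟨0, fun h => absurd h hi⟩
  choose aF haF using haux
  set P : Finset ℝ := insert (1/4 : ℝ)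
    ((I.image Arrow.val ∪ I.image aF).filter (fun r => r < 1/2)) with hPdef
  have hPne : P.Nonempty := ⟨1/4, Finset.mem_insert_self _ _⟩
  set p := P.max' hPne with hpdef
  have hp4 : (1/4 : ℝ) ≤ p := Finset.le_max' _ _ (Finset.mem_insert_self _ _)
  have hp2 : p < 1/2 := by
    rw [hpdef, Finset.max'_lt_iff]
    intro r hr
    rcases Finset.mem_insert.mp hr with rfl | hr
    · norm_num
    · exact (Finset.mem_filter.mp hr).2
  set Q : Finset ℝ := insert (1 : ℝ) ((I.image Arrow.val).filter (fun r => 1/2 < r)) with hQdef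
  have hQne : Q.Nonempty := ⟨1, Finset.mem_insert_self _ _⟩
  set q := Q.min' hQne with hqdef
  have hq1 : q ≤ 1 := Finset.min'_le _ _ (Finset.mem_insert_self _ _)
  have hq : 1/2 < q := by
    rw [hqdef, Finset.lt_min'_iff]
    intro r hr
    rcases Finset.mem_insert.mp hr with rfl | hr
    · norm_num
    · exact (Finset.mem_filter.mp hr).2
  have hvle : ∀ i, i ∈ I → i.val < 1/2 → i.val ≤ p := by
    intro i hi h
    rw [hpdef]
    refine Finset.le_max' _ _ ?_
    rw [hPdef]
    refine Finset.mem_insert_of_mem (Finset.mem_filter.mpr ?_)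
    exact ⟨Finset.mem_union_left _ (Finset.mem_image_of_mem _ hi), h⟩
  have hale : ∀ i, i ∈ I → aF i < 1/2 → aF i ≤ p := by
    intro i hi h
    rw [hpdef]
    refine Finset.le_max' _ _ ?_
    rw [hPdef]
    refine Finset.mem_insert_of_mem (Finset.mem_filter.mpr ?_)
    exact ⟨Finset.mem_union_right _ (Finset.mem_image_of_mem _ hi), h⟩
  have hvge : ∀ i, i ∈ I → 1/2 < i.val → q ≤ i.val := by
    intro i hi h
    rw [hqdef]
    refine Finset.min'_le _ _ ?_
    rw [hQdef]
    refine Finset.mem_insert_of_mem (Finset.mem_filter.mpr ?_)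
    exact ⟨Finset.mem_image_of_mem _ hi, h⟩
  have hFmono := Fpq_strictMono hp4 hp2 hq hq1
  have hGF := Gpq_Fpq hp4 hp2 hq hq1
  have hFG := Fpq_Gpq hp4 hp2 hq hq1
  have hFp : Fpq p q p = p := Fpq_id_low (le_refl p)
  have hFq : Fpq p q q = q := Fpq_q hp4 hp2 hq hq1
  have hGp : Gpq p q p = p := Gpq_id_low (le_refl p)
  have hGq : Gpq p q q = q := Gpq_q hp4 hp2 hq hq1
  have hGmono : StrictMono (Gpq p q) := by
    intro a b hab
    have h2 := hFmono.lt_iff_lt (a := Gpq p q a) (b := Gpq p q b)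
    rw [hFG a, hFG b] at h2
    exact h2.mp hab
  have hFmem : ∀ x : Arrow, 0 < Fpq p q x.val ∧ Fpq p q x.val ≤ 1 := by
    intro x
    rcases le_or_gt x.val p with h | h
    · rw [Fpq_id_low h]; exact ⟨x.pos, x.le_one⟩
    rcases le_or_gt x.val q with h2 | h2
    · constructor
      · have h3 : Fpq p q p < Fpq p q x.val := hFmono h
        rw [hFp] at h3; linarith
      · have h3 : Fpq p q x.val ≤ Fpq p q q := hFmono.monotone h2
        rw [hFq] at h3; linarith
    · rw [Fpq_id_high h2]; exact ⟨x.pos, x.le_one⟩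
  have hGmem : ∀ x : Arrow, 0 < Gpq p q x.val ∧ Gpq p q x.val ≤ 1 := by
    intro x
    rcases le_or_gt x.val p with h | h
    · rw [Gpq_id_low h]; exact ⟨x.pos, x.le_one⟩
    rcases le_or_gt x.val q with h2 | h2
    · constructor
      · have h3 : Gpq p q p < Gpq p q x.val := hGmono h
        rw [hGp] at h3; linarith
      · have h3 : Gpq p q x.val ≤ Gpq p q q := hGmono.monotone h2
        rw [hGq] at h3; linarith
    · rw [Gpq_id_high h2]; exact ⟨x.pos, x.le_one⟩
  set e : Arrow ≃ Arrow :=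
    { toFun := fun x => ⟨Fpq p q x.val, (hFmem x).1, (hFmem x).2⟩
      invFun := fun y => ⟨Gpq p q y.val, (hGmem y).1, (hGmem y).2⟩
      left_inv := fun x => Arrow.ext' (hGF x.val)
      right_inv := fun y => Arrow.ext' (hFG y.val) } with hedef
  have hemono : StrictMono ⇑e := fun a b hab => hFmono (show a.val < b.val from hab)
  set f : MonoHomeo Arrow := ⟨arrowHomeo e hemono, Or.inl hemono⟩ with hfdef
  have hfT : ((f.1 : Arrow ≃ₜ Arrow) : Arrow → Arrow) ∈ T := by
    apply hsub
    rw [Set.mem_pi]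
    intro i hi
    show e i ∈ u i
    rcases lt_trichotomy i.val (1/2) with h | h | h
    · have h2 : e i = i := Arrow.ext' (Fpq_id_low (hvle i hi h))
      rw [h2]; exact (hu i hi).2
    · have hai := haF i hi
      have hval : (e i).val = (p + 1/2)/2 := by
        show Fpq p q i.val = _
        rw [h]; exact Fpq_half hp4 hp2 hq hq1
      apply hai.2 (e i)
      · rw [hval]
        have h3 : aF i ≤ p := hale i hi (by rw [h] at hai; linarith [hai.1])
        linarith
      · rw [hval, h]; linarith
    · have hqi := hvge i hi h
      rcases eq_or_lt_of_le hqi with heq | hlt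
      · have h2 : e i = i := Arrow.ext' (by show Fpq p q i.val = i.val; rw [← heq]; exact hFq)
        rw [h2]; exact (hu i hi).2
      · have h2 : e i = i := Arrow.ext' (Fpq_id_high hlt)
        rw [h2]; exact (hu i hi).2
  have hfW : f ∈ (fun f : MonoHomeo Arrow => f⁻¹) ⁻¹' {f : MonoHomeo Arrow | f.1 half ∈ S} := by
    rw [← hTW]
    exact hfT
  have hfinal : ((f⁻¹).1 half).val ≤ 1/2 := hfW.2
  have hval : ((f⁻¹).1 half).val = Gpq p q (1/2) := rfl
  have hgt := Gpq_half_gt hp4 hp2 hq hq1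
  rw [hval] at hfinal
  linarith
end

section
/- Let L be a GO-space. Then M_p(L) is a topological group (i.e., both composition and inversion are continuous with respect to the topology of pointwise convergence) if and only if for every x ∈ L that is isolated from at least one side and every y ∈ L, the set W(x;{y}) = {f ∈ M(L) : f(x) = y} is open in M_p(L). -/
open Set Topology TopologicalSpace Filter

variable (L : Type*) [LinearOrder L] [TopologicalSpace L]

section Helpers

variable {L : Type*} [LinearOrder L] [TopologicalSpace L]

lemma go_isOpen_Iio (GO_fine : ∀ s : Set L, IsOpen[Preorder.topology L] s → IsOpen s) (a : L) :
    IsOpen (Iio a) := by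
  apply GO_fine
  let _ := Preorder.topology L
  have : OrderTopology L := ⟨rfl⟩
  exact isOpen_Iio

lemma go_isOpen_Ioi (GO_fine : ∀ s : Set L, IsOpen[Preorder.topology L] s → IsOpen s) (a : L) :
    IsOpen (Ioi a) := by
  apply GO_fine
  let _ := Preorder.topology L
  have : OrderTopology L := ⟨rfl⟩
  exact isOpen_Ioi

lemma go_isOpen_Ioo (GO_fine : ∀ s : Set L, IsOpen[Preorder.topology L] s → IsOpen s) (a b : L) :
    IsOpen (Ioo a b) :=
  Ioi_inter_Iio (a := a) (b := b) ▸ (go_isOpen_Ioi GO_fine a).inter (go_isOpen_Iio GO_fine b)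

lemma monoHomeo_continuous_eval (x : L) : Continuous fun f : MonoHomeo L => f.1 x :=
  (continuous_apply x).comp continuous_induced_dom

lemma nhdsGT_bot_iff {b : L} : 𝓝[>] b = ⊥ ↔ ∃ T : Set L, IsOpen T ∧ b ∈ T ∧ ∀ t ∈ T, t ≤ b := by
  constructor
  · intro h
    have h0 : (∅ : Set L) ∈ 𝓝[>] b := by rw [h]; exact mem_bot
    rcases mem_nhdsWithin.1 h0 with ⟨T, hT, hbT, hsub⟩
    exact ⟨T, hT, hbT, fun t ht => not_lt.1 fun hlt => hsub ⟨ht, hlt⟩⟩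
  · rintro ⟨T, hT, hbT, hle⟩
    refine empty_mem_iff_bot.1 (mem_nhdsWithin.2 ⟨T, hT, hbT, ?_⟩)
    rintro t ⟨ht, hlt⟩
    exact absurd (hle t ht) (not_le.2 hlt)

lemma nhdsLT_bot_iff {b : L} : 𝓝[<] b = ⊥ ↔ ∃ T : Set L, IsOpen T ∧ b ∈ T ∧ ∀ t ∈ T, b ≤ t := by
  constructor
  · intro h
    have h0 : (∅ : Set L) ∈ 𝓝[<] b := by rw [h]; exact mem_bot
    rcases mem_nhdsWithin.1 h0 with ⟨T, hT, hbT, hsub⟩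
    exact ⟨T, hT, hbT, fun t ht => not_lt.1 fun hlt => hsub ⟨ht, hlt⟩⟩
  · rintro ⟨T, hT, hbT, hle⟩
    refine empty_mem_iff_bot.1 (mem_nhdsWithin.2 ⟨T, hT, hbT, ?_⟩)
    rintro t ⟨ht, hlt⟩
    exact absurd (hle t ht) (not_le.2 hlt)

lemma go_sep (GO_fine : ∀ s : Set L, IsOpen[Preorder.topology L] s → IsOpen s) {a b : L}
    (hab : a < b) :
    ∃ A B : Set L, IsOpen A ∧ IsOpen B ∧ a ∈ A ∧ b ∈ B ∧ ∀ s ∈ A, ∀ t ∈ B, s < t := by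
  by_cases h : ∃ c, a < c ∧ c < b
  · rcases h with ⟨c, h1, h2⟩
    exact ⟨Iio c, Ioi c, go_isOpen_Iio GO_fine c, go_isOpen_Ioi GO_fine c, h1, h2,
      fun s hs t ht => lt_trans hs ht⟩
  · push_neg at h
    refine ⟨Iio b, Ioi a, go_isOpen_Iio GO_fine b, go_isOpen_Ioi GO_fine a, hab, hab, ?_⟩
    intro s hs t ht
    by_contra hc
    push_neg at hc
    exact absurd hs (not_lt.2 (h s (lt_of_lt_of_le ht hc)))

end Helpers

/-- **main criterion.** For a GO-space `L`, `M_p(L)` is a topological group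
(composition and inversion are both continuous) if and only if for every `x ∈ L` isolated from
at least one side and every `y ∈ L`, the set `W(x;{y}) = {f ∈ M(L) : f x = y}` is open. -/
theorem topologicalGroup_iff
    {L : Type*} [LinearOrder L] [TopologicalSpace L]
    (GO_fine : ∀ s : Set L, IsOpen[Preorder.topology L] s → IsOpen s)
    (GO_basis : ∃ B : Set (Set L), (∀ s ∈ B, s.OrdConnected) ∧
      TopologicalSpace.IsTopologicalBasis B) :
    IsTopologicalGroup (MonoHomeo L) ↔
      ∀ x : L, (𝓝[>] x = ⊥ ∨ 𝓝[<] x = ⊥) →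
        ∀ y : L, IsOpen {f : MonoHomeo L | f.1 x = y} := by
  
  constructor
  · intro TG x hx y
    haveI := TG
    have hinv : Continuous fun g : MonoHomeo L => g⁻¹ := continuous_inv
    rw [isOpen_iff_forall_mem_open]
    intro f hf
    simp only [mem_setOf_eq] at hf
    by_cases hpair : ∃ p q : L, p < q
    swap
    · refine ⟨univ, fun g _ => ?_, isOpen_univ, mem_univ f⟩
      show g.1 x = y
      by_contra hne
      rcases lt_or_gt_of_ne hne with h | h
      · exact hpair ⟨_, _, h⟩
      · exact hpair ⟨_, _, h⟩
    rcases hpair with ⟨p, q, hpq⟩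
    have hfsymm : f.1.symm y = x := by rw [← hf, f.1.symm_apply_apply]
    rcases hx with hx | hx
    · -- x isolated from the right
      obtain ⟨V, hVo, hxV, hVle⟩ := nhdsGT_bot_iff.1 hx
      have hNo : IsOpen ((fun g : MonoHomeo L => g⁻¹) ⁻¹' {h : MonoHomeo L | h.1 y ∈ V}) :=
        hinv.isOpen_preimage _ ((monoHomeo_continuous_eval y).isOpen_preimage V hVo)
      have hVo' : IsOpen (⇑f.1 '' V) := f.1.isOpen_image.2 hVo
      have hyV' : y ∈ ⇑f.1 '' V := ⟨x, hxV, hf⟩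
      rcases f.2 with fm | fa
      · -- f strictly increasing
        obtain ⟨A, Bs, hAo, hBo, hpA, hqB, hAB⟩ := go_sep GO_fine (fm hpq)
        refine ⟨{g : MonoHomeo L | g.1 p ∈ A} ∩ {g | g.1 q ∈ Bs} ∩ {g | g.1 x ∈ ⇑f.1 '' V} ∩
          ((fun g : MonoHomeo L => g⁻¹) ⁻¹' {h : MonoHomeo L | h.1 y ∈ V}), ?_, ?_, ?_⟩
        · rintro g ⟨⟨⟨hgp, hgq⟩, hgx⟩, hgi⟩
          simp only [mem_setOf_eq, mem_preimage, MonoHomeo.inv_apply] at hgp hgq hgx hgi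
          have gm : StrictMono ⇑g.1 := by
            rcases g.2 with gm | ga
            · exact gm
            · exact absurd (hAB _ hgp _ hgq) (not_lt.2 (ga hpq).le)
          have h2 : g.1.symm y ≤ x := hVle _ hgi
          have h3 : y ≤ g.1 x := by
            have := gm.monotone h2
            rwa [g.1.apply_symm_apply] at this
          have h4 : g.1 x ≤ y := by
            obtain ⟨v, hv, hvx⟩ := hgx
            rw [← hvx, ← hf]; exact fm.monotone (hVle v hv)
          exact le_antisymm h4 h3
        · exact (((((monoHomeo_continuous_eval p).isOpen_preimage A hAo).inter
            ((monoHomeo_continuous_eval q).isOpen_preimage Bs hBo)).inter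
            ((monoHomeo_continuous_eval x).isOpen_preimage _ hVo')).inter hNo)
        · exact ⟨⟨⟨hpA, hqB⟩, ⟨x, hxV, rfl⟩⟩, by
            simp only [mem_preimage, MonoHomeo.inv_apply, mem_setOf_eq, hfsymm]; exact hxV⟩
      · -- f strictly decreasing
        obtain ⟨A, Bs, hAo, hBo, hqA, hpB, hAB⟩ := go_sep GO_fine (fa hpq)
        refine ⟨{g : MonoHomeo L | g.1 q ∈ A} ∩ {g | g.1 p ∈ Bs} ∩ {g | g.1 x ∈ ⇑f.1 '' V} ∩
          ((fun g : MonoHomeo L => g⁻¹) ⁻¹' {h : MonoHomeo L | h.1 y ∈ V}), ?_, ?_, ?_⟩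
        · rintro g ⟨⟨⟨hgq, hgp⟩, hgx⟩, hgi⟩
          simp only [mem_setOf_eq, mem_preimage, MonoHomeo.inv_apply] at hgq hgp hgx hgi
          have ga : StrictAnti ⇑g.1 := by
            rcases g.2 with gm | ga
            · exact absurd (hAB _ hgq _ hgp) (not_lt.2 (gm hpq).le)
            · exact ga
          have h2 : g.1.symm y ≤ x := hVle _ hgi
          have h3 : g.1 x ≤ y := by
            have := ga.antitone h2
            rwa [g.1.apply_symm_apply] at this
          have h4 : y ≤ g.1 x := by
            obtain ⟨v, hv, hvx⟩ := hgx
            rw [← hvx, ← hf]; exact fa.antitone (hVle v hv)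
          exact le_antisymm h3 h4
        · exact (((((monoHomeo_continuous_eval q).isOpen_preimage A hAo).inter
            ((monoHomeo_continuous_eval p).isOpen_preimage Bs hBo)).inter
            ((monoHomeo_continuous_eval x).isOpen_preimage _ hVo')).inter hNo)
        · exact ⟨⟨⟨hqA, hpB⟩, ⟨x, hxV, rfl⟩⟩, by
            simp only [mem_preimage, MonoHomeo.inv_apply, mem_setOf_eq, hfsymm]; exact hxV⟩
    · -- x isolated from the left
      obtain ⟨V, hVo, hxV, hVle⟩ := nhdsLT_bot_iff.1 hx
      have hNo : IsOpen ((fun g : MonoHomeo L => g⁻¹) ⁻¹' {h : MonoHomeo L | h.1 y ∈ V}) :=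
        hinv.isOpen_preimage _ ((monoHomeo_continuous_eval y).isOpen_preimage V hVo)
      have hVo' : IsOpen (⇑f.1 '' V) := f.1.isOpen_image.2 hVo
      have hyV' : y ∈ ⇑f.1 '' V := ⟨x, hxV, hf⟩
      rcases f.2 with fm | fa
      · -- f strictly increasing
        obtain ⟨A, Bs, hAo, hBo, hpA, hqB, hAB⟩ := go_sep GO_fine (fm hpq)
        refine ⟨{g : MonoHomeo L | g.1 p ∈ A} ∩ {g | g.1 q ∈ Bs} ∩ {g | g.1 x ∈ ⇑f.1 '' V} ∩
          ((fun g : MonoHomeo L => g⁻¹) ⁻¹' {h : MonoHomeo L | h.1 y ∈ V}), ?_, ?_, ?_⟩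
        · rintro g ⟨⟨⟨hgp, hgq⟩, hgx⟩, hgi⟩
          simp only [mem_setOf_eq, mem_preimage, MonoHomeo.inv_apply] at hgp hgq hgx hgi
          have gm : StrictMono ⇑g.1 := by
            rcases g.2 with gm | ga
            · exact gm
            · exact absurd (hAB _ hgp _ hgq) (not_lt.2 (ga hpq).le)
          have h2 : x ≤ g.1.symm y := hVle _ hgi
          have h3 : g.1 x ≤ y := by
            have := gm.monotone h2
            rwa [g.1.apply_symm_apply] at this
          have h4 : y ≤ g.1 x := by
            obtain ⟨v, hv, hvx⟩ := hgx
            rw [← hvx, ← hf]; exact fm.monotone (hVle v hv)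
          exact le_antisymm h3 h4
        · exact (((((monoHomeo_continuous_eval p).isOpen_preimage A hAo).inter
            ((monoHomeo_continuous_eval q).isOpen_preimage Bs hBo)).inter
            ((monoHomeo_continuous_eval x).isOpen_preimage _ hVo')).inter hNo)
        · exact ⟨⟨⟨hpA, hqB⟩, ⟨x, hxV, rfl⟩⟩, by
            simp only [mem_preimage, MonoHomeo.inv_apply, mem_setOf_eq, hfsymm]; exact hxV⟩
      · -- f strictly decreasing
        obtain ⟨A, Bs, hAo, hBo, hqA, hpB, hAB⟩ := go_sep GO_fine (fa hpq)
        refine ⟨{g : MonoHomeo L | g.1 q ∈ A} ∩ {g | g.1 p ∈ Bs} ∩ {g | g.1 x ∈ ⇑f.1 '' V} ∩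
          ((fun g : MonoHomeo L => g⁻¹) ⁻¹' {h : MonoHomeo L | h.1 y ∈ V}), ?_, ?_, ?_⟩
        · rintro g ⟨⟨⟨hgq, hgp⟩, hgx⟩, hgi⟩
          simp only [mem_setOf_eq, mem_preimage, MonoHomeo.inv_apply] at hgq hgp hgx hgi
          have ga : StrictAnti ⇑g.1 := by
            rcases g.2 with gm | ga
            · exact absurd (hAB _ hgq _ hgp) (not_lt.2 (gm hpq).le)
            · exact ga
          have h2 : x ≤ g.1.symm y := hVle _ hgi
          have h3 : y ≤ g.1 x := by
            have := ga.antitone h2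
            rwa [g.1.apply_symm_apply] at this
          have h4 : g.1 x ≤ y := by
            obtain ⟨v, hv, hvx⟩ := hgx
            rw [← hvx, ← hf]; exact fa.antitone (hVle v hv)
          exact le_antisymm h4 h3
        · exact (((((monoHomeo_continuous_eval q).isOpen_preimage A hAo).inter
            ((monoHomeo_continuous_eval p).isOpen_preimage Bs hBo)).inter
            ((monoHomeo_continuous_eval x).isOpen_preimage _ hVo')).inter hNo)
        · exact ⟨⟨⟨hqA, hpB⟩, ⟨x, hxV, rfl⟩⟩, by
            simp only [mem_preimage, MonoHomeo.inv_apply, mem_setOf_eq, hfsymm]; exact hxV⟩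
  · intro H
    obtain ⟨B, hBconv, hBbasis⟩ := GO_basis
    have key_inv : ∀ (z : L) (U : Set L), U ∈ B → IsOpen {g : MonoHomeo L | g.1.symm z ∈ U} := by
      intro z U hU
      rw [isOpen_iff_forall_mem_open]
      intro g hg
      simp only [mem_setOf_eq] at hg
      have hgaz : g.1 (g.1.symm z) = z := g.1.apply_symm_apply z
      by_cases h1 : ∃ v ∈ U, g.1.symm z < v
      · by_cases h2 : ∃ u ∈ U, u < g.1.symm z
        · obtain ⟨v, hvU, hav⟩ := h1
          obtain ⟨u, huU, hua⟩ := h2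
          have huv : u < v := hua.trans hav
          refine ⟨({h : MonoHomeo L | h.1 u ∈ Iio z} ∩ {h | h.1 v ∈ Ioi z}) ∪
              ({h : MonoHomeo L | h.1 v ∈ Iio z} ∩ {h | h.1 u ∈ Ioi z}), ?_, ?_, ?_⟩
          · rintro h (⟨ha1, ha2⟩ | ⟨ha1, ha2⟩) <;>
              simp only [mem_setOf_eq, mem_Iio, mem_Ioi] at ha1 ha2 ⊢
            · rcases h.2 with hm | hano
              · have e1 : u < h.1.symm z := by
                  have := MonoHomeo.symm_strictMono hm ha1
                  rwa [h.1.symm_apply_apply] at this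
                have e2 : h.1.symm z < v := by
                  have := MonoHomeo.symm_strictMono hm ha2
                  rwa [h.1.symm_apply_apply] at this
                exact (hBconv U hU).out huU hvU ⟨e1.le, e2.le⟩
              · exact absurd (ha1.trans ha2) (not_lt.2 (hano huv).le)
            · rcases h.2 with hm | hano
              · exact absurd (ha1.trans ha2) (not_lt.2 (hm huv).le)
              · have e1 : u < h.1.symm z := by
                  have := MonoHomeo.symm_strictAnti hano ha2
                  rwa [h.1.symm_apply_apply] at this
                have e2 : h.1.symm z < v := by
                  have := MonoHomeo.symm_strictAnti hano ha1
                  rwa [h.1.symm_apply_apply] at this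
                exact (hBconv U hU).out huU hvU ⟨e1.le, e2.le⟩
          · exact (((monoHomeo_continuous_eval u).isOpen_preimage _
                (go_isOpen_Iio GO_fine z)).inter
                ((monoHomeo_continuous_eval v).isOpen_preimage _ (go_isOpen_Ioi GO_fine z))).union
              (((monoHomeo_continuous_eval v).isOpen_preimage _ (go_isOpen_Iio GO_fine z)).inter
                ((monoHomeo_continuous_eval u).isOpen_preimage _ (go_isOpen_Ioi GO_fine z)))
          · rcases g.2 with gm | ga
            · exact Or.inl ⟨by simp only [mem_setOf_eq, mem_Iio]; rw [← hgaz]; exact gm hua,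
                by simp only [mem_setOf_eq, mem_Ioi]; rw [← hgaz]; exact gm hav⟩
            · exact Or.inr ⟨by simp only [mem_setOf_eq, mem_Iio]; rw [← hgaz]; exact ga hav,
                by simp only [mem_setOf_eq, mem_Ioi]; rw [← hgaz]; exact ga hua⟩
        · push_neg at h2
          have hiso : 𝓝[<] (g.1.symm z) = ⊥ :=
            nhdsLT_bot_iff.2 ⟨U, hBbasis.isOpen hU, hg, fun t ht => not_lt.1 fun hlt =>
              absurd hlt (not_lt.2 (h2 t ht))⟩
          refine ⟨{h : MonoHomeo L | h.1 (g.1.symm z) = z}, ?_,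
            H _ (Or.inr hiso) z, hgaz⟩
          intro h hh
          simp only [mem_setOf_eq] at hh ⊢
          have h3 := congrArg h.1.symm hh
          rw [h.1.symm_apply_apply] at h3
          exact h3 ▸ hg
      · push_neg at h1
        have hiso : 𝓝[>] (g.1.symm z) = ⊥ :=
          nhdsGT_bot_iff.2 ⟨U, hBbasis.isOpen hU, hg, fun t ht => not_lt.1 fun hlt =>
            absurd hlt (not_lt.2 (h1 t ht))⟩
        refine ⟨{h : MonoHomeo L | h.1 (g.1.symm z) = z}, ?_,
          H _ (Or.inl hiso) z, hgaz⟩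
        intro h hh
        simp only [mem_setOf_eq] at hh ⊢
        have h3 := congrArg h.1.symm hh
        rw [h.1.symm_apply_apply] at h3
        exact h3 ▸ hg
    have hinv : Continuous fun g : MonoHomeo L => g⁻¹ := by
      apply continuous_induced_rng.2
      apply continuous_pi
      intro z
      rw [continuous_def]
      intro s hs
      rw [isOpen_iff_forall_mem_open]
      intro g hg
      obtain ⟨U, hUB, haU, hUs⟩ := hBbasis.exists_subset_of_mem_open hg hs
      exact ⟨{h : MonoHomeo L | h.1.symm z ∈ U}, fun h hh => hUs hh, key_inv z U hUB, haU⟩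
    have hmul : Continuous fun gp : MonoHomeo L × MonoHomeo L => gp.1 * gp.2 := by
      apply continuous_induced_rng.2
      apply continuous_pi
      intro z
      rw [continuous_def]
      intro s hs
      rw [isOpen_iff_forall_mem_open]
      rintro ⟨f, g⟩ hfg
      have hfg' : f.1 (g.1 z) ∈ s := hfg
      obtain ⟨U, hUB, hbU, hUs⟩ := hBbasis.exists_subset_of_mem_open hfg' hs
      by_cases hbiso : 𝓝[>] (g.1 z) = ⊥ ∨ 𝓝[<] (g.1 z) = ⊥
      · have hgz : IsOpen {g' : MonoHomeo L | g'.1 z = g.1 z} := by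
          have heq : {g' : MonoHomeo L | g'.1 z = g.1 z} =
              (fun g' : MonoHomeo L => g'⁻¹) ⁻¹' {h : MonoHomeo L | h.1 (g.1 z) = z} := by
            ext g'
            simp only [mem_setOf_eq, mem_preimage, MonoHomeo.inv_apply]
            constructor
            · intro h; rw [← h, g'.1.symm_apply_apply]
            · intro h
              have h3 := congrArg g'.1 h
              rw [g'.1.apply_symm_apply] at h3
              exact h3.symm
          rw [heq]
          exact hinv.isOpen_preimage _ (H _ hbiso z)
        refine ⟨(fun p : MonoHomeo L × MonoHomeo L => p.2) ⁻¹' {g' | g'.1 z = g.1 z} ∩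
            (fun p : MonoHomeo L × MonoHomeo L => p.1) ⁻¹' {f' | f'.1 (g.1 z) ∈ U}, ?_, ?_, ?_⟩
        · rintro ⟨f', g'⟩ ⟨h2, h1⟩
          simp only [mem_preimage, mem_setOf_eq] at h1 h2
          show f'.1 (g'.1 z) ∈ s
          rw [h2]
          exact hUs h1
        · exact (continuous_snd.isOpen_preimage _ hgz).inter
            (continuous_fst.isOpen_preimage _
              ((monoHomeo_continuous_eval (g.1 z)).isOpen_preimage _ (hBbasis.isOpen hUB)))
        · exact ⟨rfl, hbU⟩
      · push_neg at hbiso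
        obtain ⟨hr, hl⟩ := hbiso
        have hTo : IsOpen (⇑f.1 ⁻¹' U) := f.1.continuous.isOpen_preimage _ (hBbasis.isOpen hUB)
        have hbT : g.1 z ∈ ⇑f.1 ⁻¹' U := hbU
        have hv2 : ∃ v, v ∈ ⇑f.1 ⁻¹' U ∧ g.1 z < v := by
          by_contra hc
          push_neg at hc
          exact hr.ne (nhdsGT_bot_iff.2 ⟨_, hTo, hbT, fun t ht => not_lt.1 fun hlt =>
            absurd hlt (not_lt.2 (hc t ht))⟩)
        have hv1 : ∃ u, u ∈ ⇑f.1 ⁻¹' U ∧ u < g.1 z := by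
          by_contra hc
          push_neg at hc
          exact hl.ne (nhdsLT_bot_iff.2 ⟨_, hTo, hbT, fun t ht => not_lt.1 fun hlt =>
            absurd hlt (not_lt.2 (hc t ht))⟩)
        obtain ⟨v₂, hv₂T, hbv₂⟩ := hv2
        obtain ⟨v₁, hv₁T, hv₁b⟩ := hv1
        refine ⟨(fun p : MonoHomeo L × MonoHomeo L => p.2) ⁻¹' {g' | g'.1 z ∈ Ioo v₁ v₂} ∩
            ((fun p : MonoHomeo L × MonoHomeo L => p.1) ⁻¹' {f' | f'.1 v₁ ∈ U} ∩
             (fun p : MonoHomeo L × MonoHomeo L => p.1) ⁻¹' {f' | f'.1 v₂ ∈ U}), ?_, ?_, ?_⟩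
        · rintro ⟨f', g'⟩ ⟨hw, hf1, hf2⟩
          simp only [mem_preimage, mem_setOf_eq, mem_Ioo] at hw hf1 hf2
          show f'.1 (g'.1 z) ∈ s
          apply hUs
          rcases f'.2 with fm | fa
          · exact (hBconv U hUB).out hf1 hf2 ⟨fm.monotone hw.1.le, fm.monotone hw.2.le⟩
          · exact (hBconv U hUB).out hf2 hf1 ⟨fa.antitone hw.2.le, fa.antitone hw.1.le⟩
        · exact (continuous_snd.isOpen_preimage _
              ((monoHomeo_continuous_eval z).isOpen_preimage _ (go_isOpen_Ioo GO_fine v₁ v₂))).inter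
            ((continuous_fst.isOpen_preimage _
                ((monoHomeo_continuous_eval v₁).isOpen_preimage _ (hBbasis.isOpen hUB))).inter
              (continuous_fst.isOpen_preimage _
                ((monoHomeo_continuous_eval v₂).isOpen_preimage _ (hBbasis.isOpen hUB))))
        · exact ⟨⟨hv₁b, hbv₂⟩, hv₁T, hv₂T⟩
    haveI : ContinuousMul (MonoHomeo L) := ⟨hmul⟩
    haveI : ContinuousInv (MonoHomeo L) := ⟨hinv⟩
    constructor
end

section
/- Let L be a GO-space and let x ∈ L be a point that is isolated from exactly one side and does not belong to any gap of L. Suppose there exists an open neighborhood I of x in L such that x is the only point of I that is isolated from exactly one side and belongs to no gap. Then for every y ∈ L, the set U(x;{y}) = {f ∈ M(L) : f(x) = y} is open in M_p(L). -/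
open Set Topology TopologicalSpace Filter

variable (L : Type*) [LinearOrder L] [TopologicalSpace L]

/-- A point of a linearly ordered topological space is *special* if it is isolated from exactly
one side and belongs to no gap. -/
def SpecialPoint {L : Type*} [LinearOrder L] [TopologicalSpace L] (x : L) : Prop :=
  Xor' (𝓝[>] x = ⊥) (𝓝[<] x = ⊥) ∧ (∀ z : L, ¬ z ⋖ x) ∧ (∀ z : L, ¬ x ⋖ z)


section Aux

variable {L : Type*} [LinearOrder L] [TopologicalSpace L]

lemma image_Ioi_mono (e : L ≃ₜ L) (h : StrictMono (e : L → L)) (x : L) :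
    (e : L → L) '' Ioi x = Ioi (e x) := by
  ext y; constructor
  · rintro ⟨z, hz, rfl⟩; exact h hz
  · intro hy
    exact ⟨e.symm y, h.lt_iff_lt.mp (by rwa [e.apply_symm_apply]), e.apply_symm_apply y⟩

lemma image_Iio_mono (e : L ≃ₜ L) (h : StrictMono (e : L → L)) (x : L) :
    (e : L → L) '' Iio x = Iio (e x) := by
  ext y; constructor
  · rintro ⟨z, hz, rfl⟩; exact h hz
  · intro hy
    exact ⟨e.symm y, h.lt_iff_lt.mp (by rwa [e.apply_symm_apply]), e.apply_symm_apply y⟩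

lemma image_Ioi_anti (e : L ≃ₜ L) (h : StrictAnti (e : L → L)) (x : L) :
    (e : L → L) '' Ioi x = Iio (e x) := by
  ext y; constructor
  · rintro ⟨z, hz, rfl⟩; exact h hz
  · intro hy
    exact ⟨e.symm y, h.lt_iff_gt.mp (by rwa [e.apply_symm_apply]), e.apply_symm_apply y⟩

lemma image_Iio_anti (e : L ≃ₜ L) (h : StrictAnti (e : L → L)) (x : L) :
    (e : L → L) '' Iio x = Ioi (e x) := by
  ext y; constructor
  · rintro ⟨z, hz, rfl⟩; exact h hz
  · intro hy
    exact ⟨e.symm y, h.lt_iff_gt.mp (by rwa [e.apply_symm_apply]), e.apply_symm_apply y⟩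

lemma specialPoint_map (g : MonoHomeo L) (x : L) (hx : SpecialPoint x) :
    SpecialPoint (g.1 x) := by
  obtain ⟨hxor, hleft, hright⟩ := hx
  set e := g.1 with he
  have hemb := e.isEmbedding
  have hmapIoi := hemb.map_nhdsWithin_eq (Ioi x) x
  have hmapIio := hemb.map_nhdsWithin_eq (Iio x) x
  rcases g.2 with hm | hm
  · refine ⟨?_, ?_, ?_⟩
    · have h1 : (𝓝[>] (e x) = ⊥) ↔ (𝓝[>] x = ⊥) := by
        rw [← image_Ioi_mono e hm x, ← hmapIoi, Filter.map_eq_bot_iff]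
      have h2 : (𝓝[<] (e x) = ⊥) ↔ (𝓝[<] x = ⊥) := by
        rw [← image_Iio_mono e hm x, ← hmapIio, Filter.map_eq_bot_iff]
      rcases hxor with ⟨ha, hb⟩ | ⟨ha, hb⟩
      · exact Or.inl ⟨h1.mpr ha, fun h => hb (h2.mp h)⟩
      · exact Or.inr ⟨h2.mpr ha, fun h => hb (h1.mp h)⟩
    · intro z hz
      refine hleft (e.symm z) ⟨hm.lt_iff_lt.mp (by rw [e.apply_symm_apply]; exact hz.1), ?_⟩
      intro c hc1 hc2
      exact hz.2 (by simpa [he, e.apply_symm_apply] using hm hc1) (hm hc2)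
    · intro z hz
      refine hright (e.symm z) ⟨hm.lt_iff_lt.mp (by rw [e.apply_symm_apply]; exact hz.1), ?_⟩
      intro c hc1 hc2
      exact hz.2 (hm hc1) (by simpa [he, e.apply_symm_apply] using hm hc2)
  · refine ⟨?_, ?_, ?_⟩
    · have h1 : (𝓝[>] (e x) = ⊥) ↔ (𝓝[<] x = ⊥) := by
        rw [← image_Iio_anti e hm x, ← hmapIio, Filter.map_eq_bot_iff]
      have h2 : (𝓝[<] (e x) = ⊥) ↔ (𝓝[>] x = ⊥) := by
        rw [← image_Ioi_anti e hm x, ← hmapIoi, Filter.map_eq_bot_iff]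
      rcases hxor with ⟨ha, hb⟩ | ⟨ha, hb⟩
      · exact Or.inr ⟨h2.mpr ha, fun h => hb (h1.mp h)⟩
      · exact Or.inl ⟨h1.mpr ha, fun h => hb (h2.mp h)⟩
    · intro z hz
      refine hright (e.symm z) ⟨hm.lt_iff_gt.mp (by rw [e.apply_symm_apply]; exact hz.1), ?_⟩
      intro c hc1 hc2
      exact hz.2 (by simpa [he, e.apply_symm_apply] using hm hc2) (hm hc1)
    · intro z hz
      refine hleft (e.symm z) ⟨hm.lt_iff_gt.mp (by rw [e.apply_symm_apply]; exact hz.1), ?_⟩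
      intro c hc1 hc2
      exact hz.2 (hm hc2) (by simpa [he, e.apply_symm_apply] using hm hc1)

end Aux

/-- Let `L` be a GO-space and `x ∈ L` a point isolated from exactly one side and
belonging to no gap.  If some open neighborhood `I` of `x` contains no other such point, then
`U(x;{y}) = {f ∈ M(L) : f x = y}` is open in `M_p(L)` for every `y ∈ L`. -/
theorem isOpen_of_specialPoint
    {L : Type*} [LinearOrder L] [TopologicalSpace L]
    (GO_fine : ∀ s : Set L, IsOpen[Preorder.topology L] s → IsOpen s)
    (GO_basis : ∃ B : Set (Set L), (∀ s ∈ B, s.OrdConnected) ∧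
      TopologicalSpace.IsTopologicalBasis B)
    (x : L) (hx : SpecialPoint x)
    (hI : ∃ I : Set L, IsOpen I ∧ x ∈ I ∧ ∀ z ∈ I, SpecialPoint z → z = x) :
    ∀ y : L, IsOpen {f : MonoHomeo L | f.1 x = y} := by
  intro y
  obtain ⟨I, hIopen, hxI, huniq⟩ := hI
  by_cases hne : ∃ f : MonoHomeo L, f.1 x = y
  · obtain ⟨f, hf⟩ := hne
    have hJopen : IsOpen ((f.1 : L → L) '' I) := f.1.isOpenMap I hIopen
    have hset : {g : MonoHomeo L | g.1 x = y} =
        (fun g : MonoHomeo L => g.1 x) ⁻¹' ((f.1 : L → L) '' I) := by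
      ext g
      simp only [Set.mem_setOf_eq, Set.mem_preimage]
      constructor
      · intro h; exact ⟨x, hxI, by rw [hf, h]⟩
      · rintro ⟨z, hzI, hz⟩
        have hz' : z = (f⁻¹ * g).1 x := by
          simp only [MonoHomeo.mul_apply, MonoHomeo.inv_apply]
          rw [← hz, f.1.symm_apply_apply]
        have hsp : SpecialPoint z := hz' ▸ specialPoint_map (f⁻¹ * g) x hx
        have hzx := huniq z hzI hsp
        subst hzx
        rw [← hf]; exact hz.symm
    rw [hset]
    have hcont : Continuous (fun g : MonoHomeo L => g.1 x) :=
      (continuous_apply x).comp continuous_induced_dom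
    exact hJopen.preimage hcont
  · have : {g : MonoHomeo L | g.1 x = y} = ∅ := by
      ext g; simp only [Set.mem_setOf_eq, Set.mem_empty_iff_false, iff_false]
      exact fun h => hne ⟨g, h⟩
    rw [this]; exact isOpen_empty
end

section
/- Let L be a GO-space. If L can be written as a disjoint union of clopen subsets each of which, with the induced order and subspace topology, is a LOTS (i.e., its subspace topology coincides with the order topology of its induced linear order), then M_p(L) is a topological group: both composition and inversion are continuous on M_p(L). -/
open Set Topology TopologicalSpace Filter

variable (L : Type*) [LinearOrder L] [TopologicalSpace L]

section AuxiliaryLemmas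

open Set Topology TopologicalSpace Filter MonoHomeo

namespace MonoHomeoProofAux

variable {L : Type*} [LinearOrder L] [TopologicalSpace L]

theorem continuous_eval (x : L) : Continuous fun f : MonoHomeo L => f.1 x :=
  (continuous_apply x).comp continuous_induced_dom

theorem isOpen_cert (x : L) {V : Set L} (hV : IsOpen V) :
    IsOpen {f : MonoHomeo L | f.1 x ∈ V} :=
  hV.preimage (continuous_eval x)

theorem isOpen_Ioi' (hfine : ∀ s : Set L, IsOpen[Preorder.topology L] s → IsOpen s) (a : L) :
    IsOpen (Ioi a) :=
  hfine _ (TopologicalSpace.GenerateOpen.basic _ ⟨a, Or.inl rfl⟩)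

theorem isOpen_Iio' (hfine : ∀ s : Set L, IsOpen[Preorder.topology L] s → IsOpen s) (a : L) :
    IsOpen (Iio a) :=
  hfine _ (TopologicalSpace.GenerateOpen.basic _ ⟨a, Or.inr rfl⟩)

omit [LinearOrder L] [TopologicalSpace L] in
theorem exists_piece {𝒞 : Set (Set L)} (hcov : ⋃₀ 𝒞 = Set.univ) (x : L) :
    ∃ C ∈ 𝒞, x ∈ C := by
  have hx : x ∈ ⋃₀ 𝒞 := by rw [hcov]; exact mem_univ x
  simpa using hx

/-- Left half of the pinning lemma. -/
theorem key_left (hfine : ∀ s : Set L, IsOpen[Preorder.topology L] s → IsOpen s)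
    {𝒞 : Set (Set L)} (hcov : ⋃₀ 𝒞 = Set.univ)
    (hpieces : ∀ C ∈ 𝒞, IsClopen C ∧ OrderTopology C)
    {y : L} {O : Set L} (hO : IsOpen O) (hyO : y ∈ O) :
    ∃ p N, p ∈ O ∧ p ≤ y ∧ IsOpen N ∧ y ∈ N ∧ ∀ z ∈ N, p ≤ z := by
  obtain ⟨C, hC𝒞, hyC⟩ := exists_piece hcov y
  obtain ⟨hCcl, hCOT⟩ := hpieces C hC𝒞
  haveI := hCOT
  have hA : Subtype.val ⁻¹' O ∈ 𝓝 (⟨y, hyC⟩ : C) :=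
    (hO.preimage continuous_subtype_val).mem_nhds hyO
  by_cases hbelow : ∃ l : C, l < (⟨y, hyC⟩ : C)
  · obtain ⟨l, hl, hIoc⟩ := exists_Ioc_subset_of_mem_nhds hA hbelow
    by_cases hmid : ∃ c : C, l < c ∧ c < (⟨y, hyC⟩ : C)
    · obtain ⟨c, hlc, hcy⟩ := hmid
      refine ⟨(c : L), Ioi (c : L), hIoc ⟨hlc, le_of_lt hcy⟩, le_of_lt hcy,
        isOpen_Ioi' hfine _, hcy, fun z hz => le_of_lt hz⟩
    · refine ⟨y, Ioi (l : L) ∩ C, hyO, le_refl y,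
        (isOpen_Ioi' hfine _).inter hCcl.isOpen, ⟨hl, hyC⟩, ?_⟩
      rintro z ⟨hz1, hz2⟩
      by_contra hzy
      push_neg at hzy
      exact hmid ⟨⟨z, hz2⟩, hz1, hzy⟩
  · refine ⟨y, C, hyO, le_refl y, hCcl.isOpen, hyC, fun z hz => ?_⟩
    by_contra hzy
    push_neg at hzy
    exact hbelow ⟨⟨z, hz⟩, hzy⟩

/-- Right half of the pinning lemma. -/
theorem key_right (hfine : ∀ s : Set L, IsOpen[Preorder.topology L] s → IsOpen s)
    {𝒞 : Set (Set L)} (hcov : ⋃₀ 𝒞 = Set.univ)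
    (hpieces : ∀ C ∈ 𝒞, IsClopen C ∧ OrderTopology C)
    {y : L} {O : Set L} (hO : IsOpen O) (hyO : y ∈ O) :
    ∃ q N, q ∈ O ∧ y ≤ q ∧ IsOpen N ∧ y ∈ N ∧ ∀ z ∈ N, z ≤ q := by
  obtain ⟨C, hC𝒞, hyC⟩ := exists_piece hcov y
  obtain ⟨hCcl, hCOT⟩ := hpieces C hC𝒞
  haveI := hCOT
  have hA : Subtype.val ⁻¹' O ∈ 𝓝 (⟨y, hyC⟩ : C) :=
    (hO.preimage continuous_subtype_val).mem_nhds hyO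
  by_cases habove : ∃ u : C, (⟨y, hyC⟩ : C) < u
  · obtain ⟨u, hu, hIco⟩ := exists_Ico_subset_of_mem_nhds hA habove
    by_cases hmid : ∃ c : C, (⟨y, hyC⟩ : C) < c ∧ c < u
    · obtain ⟨c, hyc, hcu⟩ := hmid
      refine ⟨(c : L), Iio (c : L), hIco ⟨le_of_lt hyc, hcu⟩, le_of_lt hyc,
        isOpen_Iio' hfine _, hyc, fun z hz => le_of_lt hz⟩
    · refine ⟨y, Iio (u : L) ∩ C, hyO, le_refl y,
        (isOpen_Iio' hfine _).inter hCcl.isOpen, ⟨hu, hyC⟩, ?_⟩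
      rintro z ⟨hz1, hz2⟩
      by_contra hzy
      push_neg at hzy
      exact hmid ⟨⟨z, hz2⟩, hzy, hz1⟩
  · refine ⟨y, C, hyO, le_refl y, hCcl.isOpen, hyC, fun z hz => ?_⟩
    by_contra hzy
    push_neg at hzy
    exact habove ⟨⟨z, hz⟩, hzy⟩

/-- The pinning lemma: near any point of an open set we can find a two-sided pin. -/
theorem key_pin (hfine : ∀ s : Set L, IsOpen[Preorder.topology L] s → IsOpen s)
    {𝒞 : Set (Set L)} (hcov : ⋃₀ 𝒞 = Set.univ)
    (hpieces : ∀ C ∈ 𝒞, IsClopen C ∧ OrderTopology C)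
    {y : L} {O : Set L} (hO : IsOpen O) (hyO : y ∈ O) :
    ∃ p q N, p ∈ O ∧ q ∈ O ∧ p ≤ y ∧ y ≤ q ∧ IsOpen N ∧ y ∈ N ∧
      ∀ z ∈ N, p ≤ z ∧ z ≤ q := by
  obtain ⟨p, N₁, hp, hpy, hN₁, hyN₁, h₁⟩ := key_left hfine hcov hpieces hO hyO
  obtain ⟨q, N₂, hq, hyq, hN₂, hyN₂, h₂⟩ := key_right hfine hcov hpieces hO hyO
  exact ⟨p, q, N₁ ∩ N₂, hp, hq, hpy, hyq, hN₁.inter hN₂, ⟨hyN₁, hyN₂⟩,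
    fun z hz => ⟨h₁ z hz.1, h₂ z hz.2⟩⟩

end MonoHomeoProofAux

end AuxiliaryLemmas

section MulAux
open Set Topology TopologicalSpace Filter MonoHomeo
namespace MonoHomeoProofAux

variable {L : Type*} [LinearOrder L] [TopologicalSpace L]

theorem continuousMul_monoHomeo
    (hfine : ∀ s : Set L, IsOpen[Preorder.topology L] s → IsOpen s)
    {B : Set (Set L)} (hBc : ∀ s ∈ B, s.OrdConnected)
    (hBb : TopologicalSpace.IsTopologicalBasis B)
    {𝒞 : Set (Set L)} (hcov : ⋃₀ 𝒞 = Set.univ)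
    (hpieces : ∀ C ∈ 𝒞, IsClopen C ∧ OrderTopology C) :
    ContinuousMul (MonoHomeo L) := by
  constructor
  refine continuous_induced_rng.2 (continuous_pi fun x => ?_)
  refine continuous_iff_continuousAt.2 fun p₀ => ?_
  obtain ⟨f₀, g₀⟩ := p₀
  intro T hT
  rw [Filter.mem_map]
  obtain ⟨U, hUB, hzU, hUT⟩ := hBb.mem_nhds_iff.1 hT
  have hUopen : IsOpen U := hBb.isOpen hUB
  have hUoc : U.OrdConnected := hBc U hUB
  have hO : IsOpen ((f₀.1 : L → L) ⁻¹' U) := hUopen.preimage f₀.1.continuous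
  have hyO : g₀.1 x ∈ (f₀.1 : L → L) ⁻¹' U := hzU
  obtain ⟨p, q, N, hp, hq, hpy, hyq, hNopen, hyN, hN⟩ :=
    key_pin hfine hcov hpieces hO hyO
  have hSopen : IsOpen (({f : MonoHomeo L | f.1 p ∈ U} ∩ {f : MonoHomeo L | f.1 q ∈ U})
      ×ˢ {g : MonoHomeo L | g.1 x ∈ N}) :=
    (((isOpen_cert p hUopen).inter (isOpen_cert q hUopen)).prod (isOpen_cert x hNopen))
  refine mem_of_superset (hSopen.mem_nhds ⟨⟨hp, hq⟩, hyN⟩) ?_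
  rintro ⟨f, g⟩ ⟨⟨hfp, hfq⟩, hgN⟩
  have hz := hN _ hgN
  have : f.1 (g.1 x) ∈ U := by
    rcases f.2 with hm | ha
    · exact hUoc.out hfp hfq ⟨hm.monotone hz.1, hm.monotone hz.2⟩
    · exact hUoc.out hfq hfp ⟨ha.antitone hz.2, ha.antitone hz.1⟩
  exact hUT this

end MonoHomeoProofAux
end MulAux

section FixAux
open Set Topology TopologicalSpace Filter MonoHomeo
namespace MonoHomeoProofAux

variable {L : Type*} [LinearOrder L] [TopologicalSpace L]

/-- If `x` is the maximum of a convex open set `U` contained in a LOTS piece `C`, and `x`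
has no immediate successor in `L`, then any monotone homeomorphism with `f x ∈ U` fixes `x`. -/
theorem fix_of_no_succ {f : MonoHomeo L} (hm : StrictMono (f.1 : L → L))
    {U : Set L} (hUopen : IsOpen U) (hUoc : U.OrdConnected) {C : Set L}
    [OrderTopology C] (hUC : U ⊆ C) {x : L} (hxU : x ∈ U) (hmax : ∀ u ∈ U, u ≤ x)
    (hnosucc : ¬ ∃ t, x < t ∧ Ioo x t = ∅) (hfxU : f.1 x ∈ U) : f.1 x = x := by
  by_contra hne
  have hfxlt : f.1 x < x := lt_of_le_of_ne (hmax _ hfxU) hne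
  have hfs : f.1 (f.1.symm x) = x := f.1.apply_symm_apply x
  have hxs : x < f.1.symm x := by
    have h := hm.lt_iff_lt (a := x) (b := f.1.symm x)
    rw [hfs] at h
    exact h.1 hfxlt
  have hsymm : StrictMono (f.1.symm : L → L) := symm_strictMono hm
  have hN'open : IsOpen ((f.1 : L → L) '' U) := f.1.isOpenMap U hUopen
  have hKF : ∀ z ∈ (f.1 : L → L) '' U, f.1.symm z ≤ x := by
    rintro z ⟨u, huU, rfl⟩
    rw [Homeomorph.symm_apply_apply]
    exact hmax u huU
  have hfxC : f.1 x ∈ C := hUC hfxU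
  have hxC : x ∈ C := hUC hxU
  have hmemV : Subtype.val ⁻¹' ((f.1 : L → L) '' U) ∈ 𝓝 (⟨f.1 x, hfxC⟩ : C) :=
    (hN'open.preimage continuous_subtype_val).mem_nhds ⟨x, hxU, rfl⟩
  have hex : ∃ u : C, (⟨f.1 x, hfxC⟩ : C) < u := ⟨⟨x, hxC⟩, hfxlt⟩
  obtain ⟨u, hu, hIco⟩ := exists_Ico_subset_of_mem_nhds hmemV hex
  have hux : (u : L) ≤ x := by
    by_contra hxu
    push_neg at hxu
    have hxmem : (⟨x, hxC⟩ : C) ∈ Ico (⟨f.1 x, hfxC⟩ : C) u :=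
      ⟨le_of_lt hfxlt, hxu⟩
    exact absurd hxs (not_lt.2 (hKF x (hIco hxmem)))
  have hempty : Ioo (f.1 x) (u : L) = ∅ := by
    ext z
    simp only [mem_Ioo, mem_empty_iff_false, iff_false, not_and]
    intro h1 h2
    have hzU : z ∈ U := hUoc.out hfxU hxU ⟨le_of_lt h1, le_trans (le_of_lt h2) hux⟩
    have hzmem : (⟨z, hUC hzU⟩ : C) ∈ Ico (⟨f.1 x, hfxC⟩ : C) u := ⟨le_of_lt h1, h2⟩
    have hle := hKF z (hIco hzmem)
    have hgt : x < f.1.symm z := by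
      have h := hsymm h1
      rwa [Homeomorph.symm_apply_apply] at h
    exact absurd hgt (not_lt.2 hle)
  refine hnosucc ⟨f.1.symm u, ?_, ?_⟩
  · have h := hsymm hu
    rwa [Homeomorph.symm_apply_apply] at h
  · ext z
    simp only [mem_Ioo, mem_empty_iff_false, iff_false, not_and]
    intro h1 h2
    have hz1 : f.1 x < f.1 z := hm h1
    have hz2 : f.1 z < (u : L) := by
      have h := hm h2
      rwa [f.1.apply_symm_apply] at h
    have : f.1 z ∈ Ioo (f.1 x) (u : L) := ⟨hz1, hz2⟩
    rw [hempty] at this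
    exact this

/-- Mirror: if `x` is the minimum of a convex open `U ⊆ C` and has no immediate
predecessor, then any constrained monotone homeomorphism with `f x ∈ U` fixes `x`. -/
theorem fix_of_no_pred {f : MonoHomeo L} (hm : StrictMono (f.1 : L → L))
    {U : Set L} (hUopen : IsOpen U) (hUoc : U.OrdConnected) {C : Set L}
    [OrderTopology C] (hUC : U ⊆ C) {x : L} (hxU : x ∈ U) (hmin : ∀ u ∈ U, x ≤ u)
    (hnopred : ¬ ∃ t, t < x ∧ Ioo t x = ∅) (hfxU : f.1 x ∈ U) : f.1 x = x := by
  by_contra hne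
  have hfxgt : x < f.1 x := lt_of_le_of_ne (hmin _ hfxU) (Ne.symm hne)
  have hfs : f.1 (f.1.symm x) = x := f.1.apply_symm_apply x
  have hxs : f.1.symm x < x := by
    have h := hm.lt_iff_lt (a := f.1.symm x) (b := x)
    rw [hfs] at h
    exact h.1 hfxgt
  have hsymm : StrictMono (f.1.symm : L → L) := symm_strictMono hm
  have hN'open : IsOpen ((f.1 : L → L) '' U) := f.1.isOpenMap U hUopen
  have hKF : ∀ z ∈ (f.1 : L → L) '' U, x ≤ f.1.symm z := by
    rintro z ⟨u, huU, rfl⟩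
    rw [Homeomorph.symm_apply_apply]
    exact hmin u huU
  have hfxC : f.1 x ∈ C := hUC hfxU
  have hxC : x ∈ C := hUC hxU
  have hmemV : Subtype.val ⁻¹' ((f.1 : L → L) '' U) ∈ 𝓝 (⟨f.1 x, hfxC⟩ : C) :=
    (hN'open.preimage continuous_subtype_val).mem_nhds ⟨x, hxU, rfl⟩
  have hex : ∃ l : C, l < (⟨f.1 x, hfxC⟩ : C) := ⟨⟨x, hxC⟩, hfxgt⟩
  obtain ⟨l, hl, hIoc⟩ := exists_Ioc_subset_of_mem_nhds hmemV hex
  have hxl : x ≤ (l : L) := by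
    by_contra hlx
    push_neg at hlx
    have hxmem : (⟨x, hxC⟩ : C) ∈ Ioc l (⟨f.1 x, hfxC⟩ : C) :=
      ⟨hlx, le_of_lt hfxgt⟩
    exact absurd hxs (not_lt.2 (hKF x (hIoc hxmem)))
  have hempty : Ioo (l : L) (f.1 x) = ∅ := by
    ext z
    simp only [mem_Ioo, mem_empty_iff_false, iff_false, not_and]
    intro h1 h2
    have hzU : z ∈ U := hUoc.out hxU hfxU ⟨le_trans hxl (le_of_lt h1), le_of_lt h2⟩
    have hzmem : (⟨z, hUC hzU⟩ : C) ∈ Ioc l (⟨f.1 x, hfxC⟩ : C) := ⟨h1, le_of_lt h2⟩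
    have hge := hKF z (hIoc hzmem)
    have hlt : f.1.symm z < x := by
      have h := hsymm h2
      rwa [Homeomorph.symm_apply_apply] at h
    exact absurd hlt (not_lt.2 hge)
  refine hnopred ⟨f.1.symm l, ?_, ?_⟩
  · have h := hsymm hl
    rwa [Homeomorph.symm_apply_apply] at h
  · ext z
    simp only [mem_Ioo, mem_empty_iff_false, iff_false, not_and]
    intro h1 h2
    have hz2 : f.1 z < f.1 x := hm h2
    have hz1 : (l : L) < f.1 z := by
      have h := hm h1
      rwa [f.1.apply_symm_apply] at h
    have : f.1 z ∈ Ioo (l : L) (f.1 x) := ⟨hz1, hz2⟩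
    rw [hempty] at this
    exact this

end MonoHomeoProofAux
end FixAux

section InvAux
open Set Topology TopologicalSpace Filter MonoHomeo
namespace MonoHomeoProofAux

variable {L : Type*} [LinearOrder L] [TopologicalSpace L]

theorem inv_tendsto_one
    (hfine : ∀ s : Set L, IsOpen[Preorder.topology L] s → IsOpen s)
    {B : Set (Set L)} (hBc : ∀ s ∈ B, s.OrdConnected)
    (hBb : TopologicalSpace.IsTopologicalBasis B)
    {𝒞 : Set (Set L)} (hcov : ⋃₀ 𝒞 = Set.univ)
    (hpieces : ∀ C ∈ 𝒞, IsClopen C ∧ OrderTopology C) (x : L) :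
    Filter.Tendsto (fun f : MonoHomeo L => f.1.symm x) (𝓝 (1 : MonoHomeo L)) (𝓝 x) := by
  intro T hT
  rw [Filter.mem_map]
  obtain ⟨C, hC𝒞, hxC⟩ := exists_piece hcov x
  obtain ⟨hCcl, hCOT⟩ := hpieces C hC𝒞
  haveI := hCOT
  obtain ⟨U, hUB, hxU, hUTC⟩ :=
    hBb.mem_nhds_iff.1 (inter_mem hT (hCcl.isOpen.mem_nhds hxC))
  have hUopen : IsOpen U := hBb.isOpen hUB
  have hUoc : U.OrdConnected := hBc U hUB
  have hUT : U ⊆ T := fun z hz => (hUTC hz).1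
  have hUC : U ⊆ C := fun z hz => (hUTC hz).2
  have fix_done : ∀ f : MonoHomeo L, f.1 x = x → f.1.symm x ∈ T := by
    intro f hfx
    have h := congrArg (fun z => f.1.symm z) hfx
    simp only [Homeomorph.symm_apply_apply] at h
    rw [h.symm]
    exact hUT hxU
  have getmono : ∀ (f : MonoHomeo L) (a b c : L), a < b → b < c → f.1 a < b → b < f.1 c →
      StrictMono (f.1 : L → L) := by
    intro f a b c hab hbc h1 h2
    rcases f.2 with hm | ha
    · exact hm
    · exact absurd (lt_trans h1 h2) (not_lt.2 (le_of_lt (ha (lt_trans hab hbc))))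
  by_cases hp : ∃ p ∈ U, p < x
  · by_cases hq : ∃ q ∈ U, x < q
    · -- two-sided case
      obtain ⟨p, hpU, hpx⟩ := hp
      obtain ⟨q, hqU, hxq⟩ := hq
      refine mem_of_superset (IsOpen.mem_nhds ((isOpen_cert p (isOpen_Iio' hfine x)).inter
        (isOpen_cert q (isOpen_Ioi' hfine x)))
        ⟨by simpa using hpx, by simpa using hxq⟩) ?_
      rintro f ⟨h1, h2⟩
      have hm := getmono f p x q hpx hxq h1 h2
      have hfs : f.1 (f.1.symm x) = x := f.1.apply_symm_apply x
      have hps : p < f.1.symm x := by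
        have h := hm.lt_iff_lt (a := p) (b := f.1.symm x)
        rw [hfs] at h
        exact h.1 h1
      have hsq : f.1.symm x < q := by
        have h := hm.lt_iff_lt (a := f.1.symm x) (b := q)
        rw [hfs] at h
        exact h.1 h2
      exact hUT (hUoc.out hpU hqU ⟨le_of_lt hps, le_of_lt hsq⟩)
    · -- x is the maximum of U
      push_neg at hq
      obtain ⟨p, hpU, hpx⟩ := hp
      by_cases h3 : ∃ z, z ≠ p ∧ z ≠ x
      · obtain ⟨z, hzp, hzx⟩ := h3
        obtain ⟨a, b, c, hab, hbc⟩ : ∃ a b c : L, a < b ∧ b < c := by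
          rcases lt_trichotomy z p with h | h | h
          · exact ⟨z, p, x, h, hpx⟩
          · exact absurd h hzp
          · rcases lt_trichotomy z x with h' | h' | h'
            · exact ⟨p, z, x, h, h'⟩
            · exact absurd h' hzx
            · exact ⟨p, x, z, hpx, h'⟩
        by_cases hsucc : ∃ t, x < t ∧ Ioo x t = ∅
        · obtain ⟨t, hxt, htm⟩ := hsucc
          refine mem_of_superset (IsOpen.mem_nhds
            (((isOpen_cert a (isOpen_Iio' hfine b)).inter
              (isOpen_cert c (isOpen_Ioi' hfine b))).inter
             ((isOpen_cert x hUopen).inter (isOpen_cert t (isOpen_Ioi' hfine x))))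
            ⟨⟨by simpa using hab, by simpa using hbc⟩,
             ⟨by simpa using hxU, by simpa using hxt⟩⟩) ?_
          rintro f ⟨⟨ha1, ha2⟩, hfxU, hft⟩
          have hm := getmono f a b c hab hbc ha1 ha2
          have hfs : f.1 (f.1.symm x) = x := f.1.apply_symm_apply x
          have hxles : x ≤ f.1.symm x := by
            have h := hm.le_iff_le (a := x) (b := f.1.symm x)
            rw [hfs] at h
            exact h.1 (hq _ hfxU)
          have hst : f.1.symm x < t := by
            have h := hm.lt_iff_lt (a := f.1.symm x) (b := t)
            rw [hfs] at h
            exact h.1 hft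
          have hsx : f.1.symm x ≤ x := by
            by_contra hcon
            push_neg at hcon
            have hmem : f.1.symm x ∈ Ioo x t := ⟨hcon, hst⟩
            rw [htm] at hmem
            exact hmem
          have heq : f.1.symm x = x := le_antisymm hsx hxles
          show f.1.symm x ∈ T
          rw [heq]
          exact hUT hxU
        · refine mem_of_superset (IsOpen.mem_nhds
            (((isOpen_cert a (isOpen_Iio' hfine b)).inter
              (isOpen_cert c (isOpen_Ioi' hfine b))).inter (isOpen_cert x hUopen))
            ⟨⟨by simpa using hab, by simpa using hbc⟩, by simpa using hxU⟩) ?_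
          rintro f ⟨⟨ha1, ha2⟩, hfxU⟩
          have hm := getmono f a b c hab hbc ha1 ha2
          exact fix_done f (fix_of_no_succ hm hUopen hUoc hUC hxU hq hsucc hfxU)
      · push_neg at h3
        have hIoipx : Ioi p = ({x} : Set L) := by
          ext z
          simp only [mem_Ioi, mem_singleton_iff]
          constructor
          · intro hz
            exact h3 z (ne_of_gt hz)
          · rintro rfl
            exact hpx
        refine mem_of_superset (IsOpen.mem_nhds (isOpen_cert x (isOpen_Ioi' hfine p))
          (by simpa using hpx)) ?_
        intro f hf
        have hfx : f.1 x ∈ Ioi p := hf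
        rw [hIoipx] at hfx
        exact fix_done f hfx
  · by_cases hq : ∃ q ∈ U, x < q
    · -- x is the minimum of U
      push_neg at hp
      obtain ⟨q, hqU, hxq⟩ := hq
      by_cases h3 : ∃ z, z ≠ q ∧ z ≠ x
      · obtain ⟨z, hzq, hzx⟩ := h3
        obtain ⟨a, b, c, hab, hbc⟩ : ∃ a b c : L, a < b ∧ b < c := by
          rcases lt_trichotomy z q with h | h | h
          · rcases lt_trichotomy z x with h' | h' | h'
            · exact ⟨z, x, q, h', hxq⟩
            · exact absurd h' hzx
            · exact ⟨x, z, q, h', h⟩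
          · exact absurd h hzq
          · exact ⟨x, q, z, hxq, h⟩
        by_cases hpred : ∃ t, t < x ∧ Ioo t x = ∅
        · obtain ⟨t, htx, htm⟩ := hpred
          refine mem_of_superset (IsOpen.mem_nhds
            (((isOpen_cert a (isOpen_Iio' hfine b)).inter
              (isOpen_cert c (isOpen_Ioi' hfine b))).inter
             ((isOpen_cert x hUopen).inter (isOpen_cert t (isOpen_Iio' hfine x))))
            ⟨⟨by simpa using hab, by simpa using hbc⟩,
             ⟨by simpa using hxU, by simpa using htx⟩⟩) ?_
          rintro f ⟨⟨ha1, ha2⟩, hfxU, hft⟩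
          have hm := getmono f a b c hab hbc ha1 ha2
          have hfs : f.1 (f.1.symm x) = x := f.1.apply_symm_apply x
          have hslex : f.1.symm x ≤ x := by
            have h := hm.le_iff_le (a := f.1.symm x) (b := x)
            rw [hfs] at h
            exact h.1 (hp _ hfxU)
          have hts : t < f.1.symm x := by
            have h := hm.lt_iff_lt (a := t) (b := f.1.symm x)
            rw [hfs] at h
            exact h.1 hft
          have hxs : x ≤ f.1.symm x := by
            by_contra hcon
            push_neg at hcon
            have hmem : f.1.symm x ∈ Ioo t x := ⟨hts, hcon⟩
            rw [htm] at hmem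
            exact hmem
          have heq : f.1.symm x = x := le_antisymm hslex hxs
          show f.1.symm x ∈ T
          rw [heq]
          exact hUT hxU
        · refine mem_of_superset (IsOpen.mem_nhds
            (((isOpen_cert a (isOpen_Iio' hfine b)).inter
              (isOpen_cert c (isOpen_Ioi' hfine b))).inter (isOpen_cert x hUopen))
            ⟨⟨by simpa using hab, by simpa using hbc⟩, by simpa using hxU⟩) ?_
          rintro f ⟨⟨ha1, ha2⟩, hfxU⟩
          have hm := getmono f a b c hab hbc ha1 ha2
          exact fix_done f (fix_of_no_pred hm hUopen hUoc hUC hxU hp hpred hfxU)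
      · push_neg at h3
        have hIioqx : Iio q = ({x} : Set L) := by
          ext z
          simp only [mem_Iio, mem_singleton_iff]
          constructor
          · intro hz
            exact h3 z (ne_of_lt hz)
          · rintro rfl
            exact hxq
        refine mem_of_superset (IsOpen.mem_nhds (isOpen_cert x (isOpen_Iio' hfine q))
          (by simpa using hxq)) ?_
        intro f hf
        have hfx : f.1 x ∈ Iio q := hf
        rw [hIioqx] at hfx
        exact fix_done f hfx
    · -- U = {x}
      push_neg at hp hq
      refine mem_of_superset (IsOpen.mem_nhds (isOpen_cert x hUopen)
        (by simpa using hxU)) ?_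
      intro f hf
      have hfx : f.1 x ∈ U := hf
      exact fix_done f (le_antisymm (hq _ hfx) (hp _ hfx))

end MonoHomeoProofAux
end InvAux

section FinalAux
open Set Topology TopologicalSpace Filter MonoHomeo
namespace MonoHomeoProofAux

variable {L : Type*} [LinearOrder L] [TopologicalSpace L]

theorem continuousInv_monoHomeo (hCM : ContinuousMul (MonoHomeo L))
    (h1 : ∀ x : L, Filter.Tendsto (fun f : MonoHomeo L => f.1.symm x)
      (𝓝 (1 : MonoHomeo L)) (𝓝 x)) :
    ContinuousInv (MonoHomeo L) := by
  constructor
  refine continuous_iff_continuousAt.2 fun f₀ => ?_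
  have hinv1 : ContinuousAt (fun f : MonoHomeo L => f⁻¹) 1 := by
    rw [ContinuousAt, inv_one]
    have hrw : 𝓝 (1 : MonoHomeo L) =
        Filter.comap (fun f : MonoHomeo L => ((f.1 : L ≃ₜ L) : L → L))
          (𝓝 (((1 : MonoHomeo L).1 : L ≃ₜ L) : L → L)) :=
      nhds_induced _ _
    conv_rhs => rw [hrw]
    rw [tendsto_comap_iff, tendsto_pi_nhds]
    intro x
    exact h1 x
  have hkey : (fun f : MonoHomeo L => f⁻¹) =
      (fun h : MonoHomeo L => h * f₀⁻¹) ∘ (fun h : MonoHomeo L => h⁻¹) ∘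
        (fun f : MonoHomeo L => f₀⁻¹ * f) := by
    funext f
    simp [mul_assoc, mul_inv_rev]
  rw [hkey]
  have h₂ : ContinuousAt (fun f : MonoHomeo L => f₀⁻¹ * f) f₀ :=
    (continuous_const.mul continuous_id).continuousAt
  have h₃ : ContinuousAt (fun h : MonoHomeo L => h⁻¹) ((fun f : MonoHomeo L => f₀⁻¹ * f) f₀) := by
    simpa using hinv1
  have h₄ : ContinuousAt (fun h : MonoHomeo L => h * f₀⁻¹)
      (((fun h : MonoHomeo L => h⁻¹) ∘ (fun f : MonoHomeo L => f₀⁻¹ * f)) f₀) :=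
    (continuous_id.mul continuous_const).continuousAt
  exact h₄.comp (h₃.comp h₂)

end MonoHomeoProofAux
end FinalAux


/-- Let `L` be a GO-space. If `L` is a disjoint union of clopen subsets each of
which (with the induced order and the subspace topology) is a LOTS, then `M_p(L)` is a
topological group. -/
theorem topologicalGroup_of_clopen_LOTS_partition
    {L : Type*} [LinearOrder L] [TopologicalSpace L]
    (GO_fine : ∀ s : Set L, IsOpen[Preorder.topology L] s → IsOpen s)
    (GO_basis : ∃ B : Set (Set L), (∀ s ∈ B, s.OrdConnected) ∧
      TopologicalSpace.IsTopologicalBasis B)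
    (hpart : ∃ 𝒞 : Set (Set L), ⋃₀ 𝒞 = Set.univ ∧
      𝒞.Pairwise Disjoint ∧ ∀ C ∈ 𝒞, IsClopen C ∧ OrderTopology C) :
    IsTopologicalGroup (MonoHomeo L) := by
  obtain ⟨B, hBc, hBb⟩ := GO_basis
  obtain ⟨𝒞, hcov, _, hpieces⟩ := hpart
  have hCM : ContinuousMul (MonoHomeo L) :=
    MonoHomeoProofAux.continuousMul_monoHomeo GO_fine hBc hBb hcov hpieces
  have hCI : ContinuousInv (MonoHomeo L) :=
    MonoHomeoProofAux.continuousInv_monoHomeo hCM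
      (MonoHomeoProofAux.inv_tendsto_one GO_fine hBc hBb hcov hpieces)
  exact @IsTopologicalGroup.mk _ _ _ hCM hCI
end
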